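/- Every stratified propositional logic program containing no strong constraints has at least one stable model. -/

import Mathlib

/-- A propositional logic-program rule `head :- pos, not neg`.
`head = none` represents a strong constraint (rule with empty head). -/
structure LPRule where
  head : Option ℕ
  pos : Finset ℕ
  neg : Finset ℕ
deriving DecidableEq

namespace LP

/-- Truth of a rule head w.r.t. an interpretation; an empty head is never true. -/
def headTrue (I : Set ℕ) : Option ℕ → Prop
  | none => False
  | some a => a ∈ I

/-- The body of a rule is true w.r.t. `I`. -/
def bodyTrue (I : Set ℕ) (r : LPRule) : Prop :=
  (∀ b ∈ r.pos, b ∈ I) ∧ (∀ b ∈ r.neg, b ∉ I)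

/-- `I` satisfies rule `r`. -/
def satRule (I : Set ℕ) (r : LPRule) : Prop := bodyTrue I r → headTrue I r.head

/-- `I` is a model of the program `P`. -/
def isModel (P : Set LPRule) (I : Set ℕ) : Prop := ∀ r ∈ P, satRule I r

/-- A positive (negation-free) program. -/
def isPositive (P : Set LPRule) : Prop := ∀ r ∈ P, r.neg = ∅

/-- A constraint-free program (no rules with empty head). -/
def constraintFree (P : Set LPRule) : Prop := ∀ r ∈ P, r.head ≠ none

/-- The Gelfond-Lifschitz reduct `P^I`. -/
def reduct (P : Set LPRule) (I : Set ℕ) : Set LPRule :=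
  (fun r => LPRule.mk r.head r.pos ∅) '' {r ∈ P | ∀ b ∈ r.neg, b ∉ I}

/-- `M` is the least model of `P`. -/
def isLeastModel (P : Set LPRule) (M : Set ℕ) : Prop :=
  isModel P M ∧ ∀ M', isModel P M' → M ⊆ M'

/-- `M` is a stable model of `P`: it is the least model of the reduct `P^M`. -/
def isStable (P : Set LPRule) (M : Set ℕ) : Prop := isLeastModel (reduct P M) M

/-- `facts S` is the set of facts `{p :- | p ∈ S}`. -/
def facts (S : Set ℕ) : Set LPRule := (fun p => LPRule.mk (some p) ∅ ∅) '' S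

/-- The atoms occurring in a rule. -/
def ruleAtoms (r : LPRule) : Set ℕ := {a | r.head = some a} ∪ ↑r.pos ∪ ↑r.neg

/-- The Herbrand base of a program: all atoms occurring in it. -/
def atoms (P : Set LPRule) : Set ℕ := ⋃ r ∈ P, ruleAtoms r

/-- `p` depends on `q`: some rule has head `p` and `q` in its body. -/
def dependsOn (P : Set LPRule) (p q : ℕ) : Prop :=
  ∃ r ∈ P, r.head = some p ∧ (q ∈ r.pos ∨ q ∈ r.neg)

/-- `P` is stratified: no rule with head `p` and `not q` in the body where
`q` transitively depends on `p`. -/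
def stratified (P : Set LPRule) : Prop :=
  ∀ r ∈ P, ∀ p, r.head = some p → ∀ q ∈ r.neg, ¬ Relation.TransGen (dependsOn P) q p

/-- Hypotheses `H` do not occur in rule heads of `P`. -/
def hypFree (P : Set LPRule) (H : Finset ℕ) : Prop :=
  ∀ r ∈ P, ∀ h ∈ H, r.head ≠ some h

/-- `S` is an admissible solution: `S ⊆ H` and some stable model of
`P ∪ facts S` makes all observations true. -/
def admissible (P : Set LPRule) (H obsP obsN : Finset ℕ) (S : Set ℕ) : Prop :=
  S ⊆ ↑H ∧ ∃ M, isStable (P ∪ facts S) M ∧ (∀ o ∈ obsP, o ∈ M) ∧ (∀ o ∈ obsN, o ∉ M)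

/-- `sum_γ`: total penalty of the hypotheses of `H` belonging to `S`. -/
noncomputable def cost (γ : ℕ → NNReal) (H : Finset ℕ) (S : Set ℕ) : NNReal :=
  ∑ h ∈ H, S.indicator γ h

/-- `S` is an optimal solution: admissible with minimal total penalty. -/
def optimal (P : Set LPRule) (H obsP obsN : Finset ℕ) (γ : ℕ → NNReal) (S : Set ℕ) : Prop :=
  admissible P H obsP obsN S ∧
  ∀ S', admissible P H obsP obsN S' → cost γ H S ≤ cost γ H S'

end LP

/-!
Induction on the number of negated atoms. Stratification makes "`x` reaches, along the
dependency relation, a rule containing `not y`" a strict order on the negated atoms, so some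
negated atom `q` depends negatively on nothing. The atoms reachable from `q` form a splitting
set `U` whose bottom part is a positive program, with stable model its least model `X`.
Partially evaluating the remaining rules with respect to `X` keeps the program stratified and
removes `q` from its negated atoms, so by induction it has a stable model `Y`, and `X ∪ Y` is
stable for `P` by the splitting set theorem.
-/

namespace LP

open Relation

variable {P : Set LPRule} {I J M S U X Y : Set ℕ}

theorem headTrue_mono (h : I ⊆ J) : ∀ {o : Option ℕ}, headTrue I o → headTrue J o
  | some _, ha => h ha

theorem isModel_reduct_iff :
    isModel (reduct P I) J ↔
      ∀ r ∈ P, (∀ b ∈ r.neg, b ∉ I) → (∀ b ∈ r.pos, b ∈ J) →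
        headTrue J r.head := by
  rw [isModel, reduct, Set.forall_mem_image]
  simp [satRule, bodyTrue]

theorem isStable.subset (hM : isStable P M) (hS : ∀ r ∈ P, ∀ a, r.head = some a → a ∈ S) :
    M ⊆ S := by
  refine fun a ha => (hM.2 (M ∩ S) (isModel_reduct_iff.2 fun r hr hneg hpos => ?_) ha).2
  have hhead := isModel_reduct_iff.1 hM.1 r hr hneg fun b hb => (hpos b hb).1
  cases h : r.head with
  | none => simp [h, headTrue] at hhead
  | some a => simp only [h, headTrue] at hhead ⊢; exact ⟨hhead, hS r hr a h⟩

def leastModel (P : Set LPRule) : Set ℕ := {a | ∀ I, isModel P I → a ∈ I}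

theorem leastModel_subset (hI : isModel P I) : leastModel P ⊆ I :=
  fun _ ha => ha I hI

theorem isModel_leastModel (hpos : isPositive P) (hCF : constraintFree P) :
    isModel P (leastModel P) := by
  intro r hr hb
  obtain ⟨a, ha⟩ := Option.ne_none_iff_exists'.mp (hCF r hr)
  rw [ha]
  intro I hI
  have hbI : bodyTrue I r := ⟨fun b hb' => hb.1 b hb' I hI, by simp [hpos r hr]⟩
  simpa [ha, headTrue] using hI r hr hbI

theorem reduct_of_isPositive (hpos : isPositive P) (I : Set ℕ) : reduct P I = P := by
  ext r
  constructor
  · rintro ⟨s, ⟨hs, -⟩, rfl⟩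
    rwa [← hpos s hs]
  · intro hr
    exact ⟨r, ⟨hr, by simp [hpos r hr]⟩, by rw [← hpos r hr]⟩

theorem isStable_leastModel (hpos : isPositive P) (hCF : constraintFree P) :
    isStable P (leastModel P) := by
  rw [isStable, isLeastModel, reduct_of_isPositive hpos]
  exact ⟨isModel_leastModel hpos hCF, fun _ => leastModel_subset⟩

def headIn (U : Set ℕ) (r : LPRule) : Prop := ∃ a ∈ U, r.head = some a

/-- A splitting set in the sense of Lifschitz and Turner. -/
def isSplittingSet (P : Set LPRule) (U : Set ℕ) : Prop :=
  ∀ r ∈ P, headIn U r → (∀ b ∈ r.pos, b ∈ U) ∧ ∀ b ∈ r.neg, b ∈ U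

def bottom (P : Set LPRule) (U : Set ℕ) : Set LPRule := {r ∈ P | headIn U r}

open Classical in
noncomputable def evalRule (U : Set ℕ) (r : LPRule) : LPRule :=
  ⟨r.head, r.pos.filter (· ∉ U), r.neg.filter (· ∉ U)⟩

/-- Lifschitz and Turner's partial evaluation `e_U(P \ b_U(P), X)` of the top part. -/
def partialEval (P : Set LPRule) (U X : Set ℕ) : Set LPRule :=
  evalRule U ''
    {r ∈ P | ¬ headIn U r ∧ (∀ b ∈ r.pos, b ∈ U → b ∈ X) ∧ ∀ b ∈ r.neg, b ∈ U → b ∉ X}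

@[simp]
theorem mem_evalRule_pos {r : LPRule} {b : ℕ} :
    b ∈ (evalRule U r).pos ↔ b ∈ r.pos ∧ b ∉ U := by
  simp [evalRule]

@[simp]
theorem mem_evalRule_neg {r : LPRule} {b : ℕ} :
    b ∈ (evalRule U r).neg ↔ b ∈ r.neg ∧ b ∉ U := by
  simp [evalRule]

/-- The splitting set theorem. -/
theorem isStable_union (hU : isSplittingSet P U) (hX : isStable (bottom P U) X)
    (hY : isStable (partialEval P U X) Y) : isStable P (X ∪ Y) := by
  have hXU : X ⊆ U := hX.subset fun r hr a ha => by
    obtain ⟨a', ha', h⟩ := hr.2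
    rw [ha, Option.some_inj] at h
    rwa [h]
  have hYU : Y ⊆ Uᶜ := hY.subset <| by
    rintro _ ⟨r, ⟨-, htop, -⟩, rfl⟩ a ha haU
    exact htop ⟨a, haU, ha⟩
  have memU : ∀ b ∈ U, b ∈ X ∪ Y → b ∈ X := fun b hbU hb =>
    hb.resolve_right fun hbY => hYU hbY hbU
  have memUc : ∀ b ∉ U, b ∈ X ∪ Y → b ∈ Y := fun b hbU hb =>
    hb.resolve_left fun hbX => hbU (hXU hbX)
  refine ⟨isModel_reduct_iff.2 fun r hr hneg hpos => ?_, fun J hJ => ?_⟩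
  · by_cases hrU : headIn U r
    · have hposU := (hU r hr hrU).1
      exact headTrue_mono Set.subset_union_left <|
        isModel_reduct_iff.1 hX.1 r ⟨hr, hrU⟩ (fun b hb hbX => hneg b hb (Or.inl hbX))
          fun b hb => memU b (hposU b hb) (hpos b hb)
    · refine headTrue_mono Set.subset_union_right <|
        isModel_reduct_iff.1 hY.1 (evalRule U r) ⟨r, ⟨hr, hrU, fun b hb hbU =>
          memU b hbU (hpos b hb), fun b hb _ hbX => hneg b hb (Or.inl hbX)⟩, rfl⟩ ?_ ?_
      · simp only [mem_evalRule_neg, and_imp]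
        exact fun b hb _ hbY => hneg b hb (Or.inr hbY)
      · simp only [mem_evalRule_pos, and_imp]
        exact fun b hb hbU => memUc b hbU (hpos b hb)
  · rw [isModel_reduct_iff] at hJ
    have hXJ : X ⊆ J := hX.2 J <| isModel_reduct_iff.2 fun r hr hneg hpos =>
      hJ r hr.1 (fun b hb hbM => hneg b hb (memU b ((hU r hr.1 hr.2).2 b hb) hbM)) hpos
    have hYJ : Y ⊆ J := hY.2 J <| isModel_reduct_iff.2 <| by
      rintro _ ⟨r, ⟨hr, -, hposX, hnegX⟩, rfl⟩ hneg hpos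
      simp only [mem_evalRule_neg, mem_evalRule_pos, and_imp] at hneg hpos
      refine hJ r hr (fun b hb hbM => ?_) fun b hb => ?_
      · by_cases hbU : b ∈ U
        · exact hnegX b hb hbU (memU b hbU hbM)
        · exact hneg b hb hbU (memUc b hbU hbM)
      · by_cases hbU : b ∈ U
        · exact hXJ (hposX b hb hbU)
        · exact hpos b hb hbU
    exact Set.union_subset hXJ hYJ

def negAtoms (P : Set LPRule) : Set ℕ := ⋃ r ∈ P, (r.neg : Set ℕ)

theorem mem_negAtoms {a : ℕ} : a ∈ negAtoms P ↔ ∃ r ∈ P, a ∈ r.neg := by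
  simp [negAtoms]

theorem negAtoms_finite (hFin : P.Finite) : (negAtoms P).Finite :=
  hFin.biUnion fun r _ => r.neg.finite_toSet

theorem isPositive_of_negAtoms_eq_empty (h : negAtoms P = ∅) : isPositive P := fun r hr =>
  Finset.eq_empty_of_forall_notMem fun b hb =>
    Set.notMem_empty b (h ▸ mem_negAtoms.2 ⟨r, hr, hb⟩)

def dependsNegOn (P : Set LPRule) (x y : ℕ) : Prop :=
  ∃ r ∈ P, ∃ p, r.head = some p ∧ y ∈ r.neg ∧ ReflTransGen (dependsOn P) x p

theorem dependsNegOn.mem_negAtoms {x y : ℕ} (h : dependsNegOn P x y) : y ∈ negAtoms P :=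
  let ⟨r, hr, _, _, hy, _⟩ := h
  LP.mem_negAtoms.2 ⟨r, hr, hy⟩

theorem dependsNegOn.trans {x y z : ℕ} (hxy : dependsNegOn P x y) (hyz : dependsNegOn P y z) :
    dependsNegOn P x z := by
  obtain ⟨r, hr, p, hp, hy, hxp⟩ := hxy
  obtain ⟨s, hs, p', hp', hz, hyp'⟩ := hyz
  exact ⟨s, hs, p', hp', hz, (hxp.tail ⟨r, hr, hp, Or.inr hy⟩).trans hyp'⟩

theorem not_dependsNegOn_self (hStrat : stratified P) (x : ℕ) : ¬ dependsNegOn P x x := by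
  rintro ⟨r, hr, p, hp, hx, hxp⟩
  refine hStrat r hr p hp x hx ?_
  rcases reflTransGen_iff_eq_or_transGen.1 hxp with rfl | hxp
  · exact TransGen.single ⟨r, hr, hp, Or.inr hx⟩
  · exact hxp

/-- Stratification makes `dependsNegOn P` a strict order, hence well-founded on the finite set
of negated atoms. -/
theorem exists_forall_not_dependsNegOn (hFin : P.Finite) (hStrat : stratified P)
    (hne : (negAtoms P).Nonempty) : ∃ q ∈ negAtoms P, ∀ y, ¬ dependsNegOn P q y := by
  have : IsStrictOrder ℕ (flip (dependsNegOn P)) :=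
    { irrefl := not_dependsNegOn_self hStrat
      trans := fun _ _ _ h₁ h₂ => dependsNegOn.trans h₂ h₁ }
  obtain ⟨q, hq, hmin⟩ := (Set.wellFoundedOn_iff.1
    ((negAtoms_finite hFin).wellFoundedOn (r := flip (dependsNegOn P)))).has_min _ hne
  exact ⟨q, hq, fun y hy => hmin y hy.mem_negAtoms ⟨hy, hy.mem_negAtoms, hq⟩⟩

theorem isSplittingSet_reflTransGen (q : ℕ) :
    isSplittingSet P {b | ReflTransGen (dependsOn P) q b} := by
  rintro r hr ⟨a, ha, hra⟩
  exact ⟨fun b hb => ha.tail ⟨r, hr, hra, Or.inl hb⟩,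
    fun b hb => ha.tail ⟨r, hr, hra, Or.inr hb⟩⟩

theorem isPositive_bottom_reflTransGen {q : ℕ} (hq : ∀ y, ¬ dependsNegOn P q y) :
    isPositive (bottom P {b | ReflTransGen (dependsOn P) q b}) := by
  rintro r ⟨hr, a, ha, hra⟩
  exact Finset.eq_empty_of_forall_notMem fun y hy => hq y ⟨r, hr, a, hra, hy, ha⟩

theorem constraintFree_bottom : constraintFree (bottom P U) := by
  rintro r ⟨-, a, -, hra⟩
  simp [hra]

theorem partialEval_finite (hFin : P.Finite) : (partialEval P U X).Finite :=
  (hFin.image _).subset (Set.image_mono fun _ hr => hr.1)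

theorem constraintFree_partialEval (hCF : constraintFree P) :
    constraintFree (partialEval P U X) := by
  rintro _ ⟨r, ⟨hr, -⟩, rfl⟩
  exact hCF r hr

theorem dependsOn_partialEval {p c : ℕ} (h : dependsOn (partialEval P U X) p c) :
    dependsOn P p c := by
  obtain ⟨_, ⟨r, ⟨hr, -⟩, rfl⟩, hp, hc⟩ := h
  simp only [mem_evalRule_pos, mem_evalRule_neg] at hc
  exact ⟨r, hr, hp, hc.imp And.left And.left⟩

theorem stratified_partialEval (hStrat : stratified P) : stratified (partialEval P U X) := by
  rintro _ ⟨r, ⟨hr, -⟩, rfl⟩ p hp y hy hyp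
  exact hStrat r hr p hp y (mem_evalRule_neg.1 hy).1
    (TransGen.mono (fun _ _ => dependsOn_partialEval) _ _ hyp)

theorem negAtoms_partialEval_subset : negAtoms (partialEval P U X) ⊆ negAtoms P \ U := by
  intro b hb
  obtain ⟨_, ⟨r, ⟨hr, -⟩, rfl⟩, hb⟩ := mem_negAtoms.1 hb
  rw [mem_evalRule_neg] at hb
  exact ⟨mem_negAtoms.2 ⟨r, hr, hb.1⟩, hb.2⟩

theorem negAtoms_partialEval_ssubset {q : ℕ} (hq : q ∈ negAtoms P) (hqU : q ∈ U) :
    negAtoms (partialEval P U X) ⊂ negAtoms P :=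
  (Set.ssubset_iff_of_subset fun _ hb => (negAtoms_partialEval_subset hb).1).2
    ⟨q, hq, fun hq' => (negAtoms_partialEval_subset hq').2 hqU⟩

end LP

/-- a stratified program without strong constraints has at least
one stable model. -/
theorem stratified_exists_stable (P : Set LPRule) (hFin : P.Finite)
    (hStrat : LP.stratified P) (hCF : LP.constraintFree P) :
    ∃ M, LP.isStable P M := by
  induction hn : (LP.negAtoms P).ncard using Nat.strong_induction_on generalizing P with
  | _ n ih =>
  rcases (LP.negAtoms P).eq_empty_or_nonempty with hNA | hNA
  · exact ⟨_, LP.isStable_leastModel (LP.isPositive_of_negAtoms_eq_empty hNA) hCF⟩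
  obtain ⟨q, hq, hqmin⟩ := LP.exists_forall_not_dependsNegOn hFin hStrat hNA
  set U := {b | Relation.ReflTransGen (LP.dependsOn P) q b}
  have hX : LP.isStable (LP.bottom P U) (LP.leastModel (LP.bottom P U)) :=
    LP.isStable_leastModel (LP.isPositive_bottom_reflTransGen hqmin) LP.constraintFree_bottom
  set top := LP.partialEval P U (LP.leastModel (LP.bottom P U))
  have hlt : (LP.negAtoms top).ncard < n :=
    hn ▸ Set.ncard_lt_ncard (LP.negAtoms_partialEval_ssubset hq .refl)
      (LP.negAtoms_finite hFin)
  obtain ⟨Y, hY⟩ := ih _ hlt top (LP.partialEval_finite hFin) (LP.stratified_partialEval hStrat)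
    (LP.constraintFree_partialEval hCF) rfl
  exact ⟨_, LP.isStable_union (LP.isSplittingSet_reflTransGen q) hX hY⟩
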